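/- arXiv:2503.06725 — 4 statements merged into one kernel-verified Lean document; each statement's English description precedes it below -/
import Mathlib

section
/- For every initial state s, every attribute index m, every age value δ ∈ {1,…,Δmax}, and every usefulness value ν ∈ U, the state whose m-th component is (δ, ν) and whose every other component m' ≠ m has age Δmax and usefulness equal to that of s at m' is reachable from s with positive probability in finitely many steps under the stationary policy that always queries attribute m. (This is the reachability of the recurrent subsets S_m underlying the weak accessibility of the CMDP asserted in Proposition 1.) -/
open scoped Classical

/-- Age-of-information increment: ages are `1,…,Δmax`, encoded by `Fin Δmax` (value `i` encodes
age `i+1`); the new age is `min (age + 1) Δmax`. -/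
def ageSucc {Δmax : ℕ} (hΔ : 2 ≤ Δmax) (δ : Fin Δmax) : Fin Δmax :=
  ⟨min (δ.val + 1) (Δmax - 1), by have := δ.isLt; omega⟩

/-- One-step transition probabilities of the chain on states `Fin M → (Fin Δmax × U)` under the
stationary policy that always queries attribute `m`: with probability `q m · P m ν` (for each
`ν ∈ U`), attribute `m`'s component is reset to `(age 1, ν)` while every other attribute has its
age replaced by `min (age + 1) Δmax` and its usefulness unchanged; with probability `1 − q m`,
every attribute has its age replaced by `min (age + 1) Δmax` and its usefulness unchanged. -/
noncomputable def queryStep {M Δmax : ℕ} (hΔ : 2 ≤ Δmax) {U : Type*}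
    (q : Fin M → ℝ) (P : Fin M → U → ℝ) (m : Fin M)
    (s s' : Fin M → Fin Δmax × U) : ℝ :=
  (if (s' m).1 = (⟨0, by omega⟩ : Fin Δmax) ∧
      (∀ m', m' ≠ m → s' m' = (ageSucc hΔ (s m').1, (s m').2))
   then q m * P m (s' m).2 else 0) +
  (if s' = (fun m' => (ageSucc hΔ (s m').1, (s m').2)) then 1 - q m else 0)

/-- `s'` is reachable from `s` with positive probability in finitely many steps under the kernel
`K`: there is a sequence `s = s₀, s₁, …, s_n = s'` in which each consecutive one-step transition
has positive probability. -/
def Reachable {σ : Type*} (K : σ → σ → ℝ) (s s' : σ) : Prop :=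
  ∃ n : ℕ, ∃ path : ℕ → σ, path 0 = s ∧ path n = s' ∧
    ∀ i < n, 0 < K (path i) (path (i + 1))

namespace RecAux

variable {M Δmax : ℕ} {U : Type*}

/-- Failure (no-update) transition map. -/
def F (hΔ : 2 ≤ Δmax) (s : Fin M → Fin Δmax × U) : Fin M → Fin Δmax × U :=
  fun m' => (ageSucc hΔ (s m').1, (s m').2)

lemma F_iter (hΔ : 2 ≤ Δmax) (k : ℕ) (s : Fin M → Fin Δmax × U) (m' : Fin M) :
    (F hΔ)^[k] s m' = (⟨min ((s m').1.val + k) (Δmax - 1), by omega⟩, (s m').2) := by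
  induction k generalizing s with
  | zero =>
    have := (s m').1.isLt
    simp only [Function.iterate_zero, id_eq]
    rw [Prod.ext_iff]
    exact ⟨Fin.ext (by simp; omega), rfl⟩
  | succ k ih =>
    rw [Function.iterate_succ_apply, ih]
    have h1 : (F hΔ s m').1.val = min ((s m').1.val + 1) (Δmax - 1) := rfl
    have h2 : (F hΔ s m').2 = (s m').2 := rfl
    rw [Prod.ext_iff]
    refine ⟨Fin.ext ?_, h2⟩
    simp [h1]; omega

lemma fail_pos (hΔ : 2 ≤ Δmax) (q : Fin M → ℝ) (P : Fin M → U → ℝ) (m : Fin M)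
    (hP : ∀ m ν, 0 < P m ν) (hq0 : 0 < q m) (hq1 : q m < 1)
    (s : Fin M → Fin Δmax × U) :
    0 < queryStep hΔ q P m s (F hΔ s) := by
  unfold queryStep
  apply add_pos_of_nonneg_of_pos
  · split_ifs with h
    · exact mul_nonneg hq0.le (hP _ _).le
    · exact le_refl 0
  · have h : F hΔ s = fun m' => (ageSucc hΔ (s m').1, (s m').2) := rfl
    rw [if_pos h]; linarith

lemma succ_pos (hΔ : 2 ≤ Δmax) (q : Fin M → ℝ) (P : Fin M → U → ℝ) (m : Fin M) (ν : U)
    (hP : ∀ m ν, 0 < P m ν) (hq0 : 0 < q m) (hq1 : q m < 1)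
    (s : Fin M → Fin Δmax × U) :
    0 < queryStep hΔ q P m s
      (fun m' => if m' = m then ((⟨0, by omega⟩ : Fin Δmax), ν)
        else (ageSucc hΔ (s m').1, (s m').2)) := by
  classical
  unfold queryStep
  apply add_pos_of_pos_of_nonneg
  · rw [if_pos]
    · simp only [if_pos rfl]
      exact mul_pos hq0 (hP _ _)
    · refine ⟨by simp, fun m' hm' => by simp [hm']⟩
  · split_ifs with h
    · linarith
    · exact le_refl 0

end RecAux

/-- For every initial state `s`, attribute `m`, age value `δ`, and usefulness value `ν`, the
state whose `m`-th component is `(δ, ν)` and whose every other component `m' ≠ m` has age `Δmax`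
and usefulness equal to that of `s` at `m'` is reachable from `s` with positive probability in
finitely many steps under the stationary policy that always queries attribute `m`. -/
theorem recurrent_subset_reachable {M Δmax : ℕ} (hM : 1 ≤ M) (hΔ : 2 ≤ Δmax)
    {U : Type*} [Fintype U] [Nonempty U]
    (P : Fin M → U → ℝ) (hP : ∀ m ν, 0 < P m ν) (hPsum : ∀ m, ∑ ν, P m ν = 1)
    (q : Fin M → ℝ) (hq0 : ∀ m, 0 < q m) (hq1 : ∀ m, q m < 1)
    (s : Fin M → Fin Δmax × U) (m : Fin M) (δ : Fin Δmax) (ν : U) :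
    Reachable (queryStep hΔ q P m) s
      (fun m' => if m' = m then (δ, ν)
        else ((⟨Δmax - 1, by omega⟩ : Fin Δmax), (s m').2)) := by
  classical
  open RecAux in
  set t := (F hΔ)^[Δmax - 1] s with ht
  set G : Fin M → Fin Δmax × U := fun m' =>
    if m' = m then ((⟨0, by omega⟩ : Fin Δmax), ν)
    else (ageSucc hΔ (t m').1, (t m').2) with hG
  refine ⟨Δmax + δ.val,
    fun i => if i ≤ Δmax - 1 then (F hΔ)^[i] s else (F hΔ)^[i - Δmax] G, ?_, ?_, ?_⟩
  · simp
  · beta_reduce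
    rw [if_neg (by omega : ¬ (Δmax + δ.val ≤ Δmax - 1))]
    funext m'
    rw [show Δmax + δ.val - Δmax = δ.val by omega, F_iter hΔ δ.val G m']
    by_cases hm : m' = m
    · subst hm
      have hG1 : G m' = ((⟨0, by omega⟩ : Fin Δmax), ν) := by simp [hG]
      rw [if_pos rfl]
      simp only [hG1]
      rw [Prod.ext_iff]
      have := δ.isLt
      exact ⟨Fin.ext (by simp; omega), rfl⟩
    · have hG1 : G m' = (ageSucc hΔ (t m').1, (t m').2) := by simp [hG, hm]
      have ht1 : t m' = (⟨min ((s m').1.val + (Δmax - 1)) (Δmax - 1), by omega⟩,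
          (s m').2) := F_iter hΔ (Δmax - 1) s m'
      rw [if_neg hm]
      simp only [hG1, ht1]
      rw [Prod.ext_iff]
      refine ⟨Fin.ext ?_, rfl⟩
      simp [ageSucc]
  · intro i hi
    beta_reduce
    rcases lt_trichotomy i (Δmax - 1) with h1 | h1 | h1
    · rw [if_pos (by omega : i ≤ Δmax - 1), if_pos (by omega : i + 1 ≤ Δmax - 1),
        Function.iterate_succ_apply']
      exact fail_pos hΔ q P m hP (hq0 m) (hq1 m) _
    · subst h1
      rw [if_pos le_rfl, if_neg (by omega),
        show Δmax - 1 + 1 - Δmax = 0 by omega, Function.iterate_zero, id_eq]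
      exact succ_pos hΔ q P m ν hP (hq0 m) (hq1 m) t
    · rw [if_neg (by omega), if_neg (by omega),
        show i + 1 - Δmax = (i - Δmax) + 1 by omega, Function.iterate_succ_apply']
      exact fail_pos hΔ q P m hP (hq0 m) (hq1 m) _
end

section
/- The Bellman optimality operator T is a γ-contraction in the sup norm: for all V, W : S → ℝ, ‖T V − T W‖∞ ≤ γ · ‖V − W‖∞. -/
/-- The Bellman optimality operator:
`(T V) s = max_{a ∈ A} ∑_{s'} p s a s' * (r s a s' + γ * V s')`. -/
noncomputable def bellman {S A : Type*} [Fintype S] [Fintype A] [Nonempty A]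
    (p : S → A → S → ℝ) (r : S → A → S → ℝ) (γ : ℝ) (V : S → ℝ) : S → ℝ :=
  fun s => Finset.univ.sup' Finset.univ_nonempty
    (fun a => ∑ s', p s a s' * (r s a s' + γ * V s'))

/-- The sup norm `‖V‖∞ = max_s |V s|` on real-valued functions on a finite nonempty type. -/
noncomputable def supNorm {S : Type*} [Fintype S] [Nonempty S] (V : S → ℝ) : ℝ :=
  Finset.univ.sup' Finset.univ_nonempty (fun s => |V s|)

private lemma sup'_sub_le {A : Type*} [Fintype A] [Nonempty A] (f g : A → ℝ) (c : ℝ)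
    (h : ∀ a, f a - g a ≤ c) :
    Finset.univ.sup' Finset.univ_nonempty f - Finset.univ.sup' Finset.univ_nonempty g ≤ c := by
  rw [sub_le_iff_le_add]
  apply Finset.sup'_le
  intro a _
  calc f a ≤ g a + c := by linarith [h a]
    _ ≤ c + Finset.univ.sup' Finset.univ_nonempty g := by
        have := Finset.le_sup' g (Finset.mem_univ a)
        linarith

/-- The Bellman optimality operator is a `γ`-contraction in the sup norm. -/
theorem bellman_contraction {S A : Type*} [Fintype S] [Nonempty S] [Fintype A] [Nonempty A]
    (p : S → A → S → ℝ) (hp0 : ∀ s a s', 0 ≤ p s a s')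
    (hp1 : ∀ s a, ∑ s', p s a s' = 1)
    (r : S → A → S → ℝ) (γ : ℝ) (hγ0 : 0 ≤ γ) (hγ1 : γ < 1) :
    ∀ V W : S → ℝ,
      supNorm (bellman p r γ V - bellman p r γ W) ≤ γ * supNorm (V - W) := by
  intro V W
  have key : ∀ (V W : S → ℝ) (s : S) (a : A),
      (∑ s', p s a s' * (r s a s' + γ * V s')) - (∑ s', p s a s' * (r s a s' + γ * W s'))
        ≤ γ * supNorm (V - W) := by
    intro V W s a
    rw [← Finset.sum_sub_distrib]
    have : ∀ s' : S, p s a s' * (r s a s' + γ * V s') - p s a s' * (r s a s' + γ * W s')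
        = p s a s' * (γ * (V s' - W s')) := by intro s'; ring
    simp_rw [this]
    calc ∑ s', p s a s' * (γ * (V s' - W s'))
        ≤ ∑ s', p s a s' * (γ * supNorm (V - W)) := by
          apply Finset.sum_le_sum
          intro s' _
          apply mul_le_mul_of_nonneg_left _ (hp0 s a s')
          apply mul_le_mul_of_nonneg_left _ hγ0
          calc V s' - W s' ≤ |V s' - W s'| := le_abs_self _
            _ = |(V - W) s'| := rfl
            _ ≤ supNorm (V - W) := Finset.le_sup' (fun s => |(V - W) s|) (Finset.mem_univ s')
      _ = γ * supNorm (V - W) := by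
          rw [← Finset.sum_mul, hp1, one_mul]
  apply Finset.sup'_le
  intro s _
  simp only [Pi.sub_apply, bellman]
  rw [abs_sub_le_iff]
  constructor
  · exact sup'_sub_le _ _ _ (key V W s)
  · have h := sup'_sub_le (fun a => ∑ s', p s a s' * (r s a s' + γ * W s'))
      (fun a => ∑ s', p s a s' * (r s a s' + γ * V s')) (γ * supNorm (W - V)) (key W V s)
    have : supNorm (W - V) = supNorm (V - W) := by
      unfold supNorm
      congr 1
      ext s'
      simp [abs_sub_comm]
    rw [this] at h
    exact h
end

section
/- The Bellman optimality operator T has a unique fixed point V* : S → ℝ, i.e., there exists exactly one function V* with T V* = V*. -/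
lemma abs_sup'_sub_sup'_le' {A : Type*} (t : Finset A) (ht : t.Nonempty)
    (f g : A → ℝ) (c : ℝ) (h : ∀ a ∈ t, |f a - g a| ≤ c) :
    |t.sup' ht f - t.sup' ht g| ≤ c := by
  rw [abs_sub_le_iff]
  constructor
  · rw [sub_le_iff_le_add]
    apply Finset.sup'_le
    intro a ha
    calc f a ≤ g a + c := by have := h a ha; rw [abs_sub_le_iff] at this; linarith [this.1]
    _ ≤ t.sup' ht g + c := by have := Finset.le_sup' g ha; linarith
    _ = c + t.sup' ht g := by ring
  · rw [sub_le_iff_le_add]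
    apply Finset.sup'_le
    intro a ha
    calc g a ≤ f a + c := by have := h a ha; rw [abs_sub_le_iff] at this; linarith [this.2]
    _ ≤ t.sup' ht f + c := by have := Finset.le_sup' f ha; linarith
    _ = c + t.sup' ht f := by ring

/-- The Bellman optimality operator has a unique fixed point `V*`. -/
theorem bellman_unique_fixedPoint {S A : Type*} [Fintype S] [Nonempty S] [Fintype A] [Nonempty A]
    (p : S → A → S → ℝ) (hp0 : ∀ s a s', 0 ≤ p s a s')
    (hp1 : ∀ s a, ∑ s', p s a s' = 1)
    (r : S → A → S → ℝ) (γ : ℝ) (hγ0 : 0 ≤ γ) (hγ1 : γ < 1) :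
    ∃! Vstar : S → ℝ, bellman p r γ Vstar = Vstar := by
  set K : NNReal := ⟨γ, hγ0⟩ with hK
  have hlip : LipschitzWith K (bellman p r γ) := by
    apply LipschitzWith.of_dist_le_mul
    intro V W
    rw [dist_pi_le_iff (by positivity)]
    intro s
    rw [Real.dist_eq]
    apply abs_sup'_sub_sup'_le'
    intro a _
    have : (∑ s', p s a s' * (r s a s' + γ * V s')) - ∑ s', p s a s' * (r s a s' + γ * W s')
        = ∑ s', p s a s' * (γ * (V s' - W s')) := by
      rw [← Finset.sum_sub_distrib]; congr 1; ext s'; ring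
    rw [this]
    calc |∑ s', p s a s' * (γ * (V s' - W s'))|
        ≤ ∑ s', |p s a s' * (γ * (V s' - W s'))| := Finset.abs_sum_le_sum_abs _ _
      _ ≤ ∑ s', p s a s' * (γ * dist V W) := by
          apply Finset.sum_le_sum
          intro s' _
          rw [abs_mul, abs_of_nonneg (hp0 s a s'), abs_mul, abs_of_nonneg hγ0]
          gcongr
          · exact hp0 s a s'
          · exact (Real.dist_eq (V s') (W s')) ▸ dist_le_pi_dist V W s'
      _ = γ * dist V W := by rw [← Finset.sum_mul, hp1 s a, one_mul]
      _ = (K : ℝ) * dist V W := rfl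
  have hcontr : ContractingWith K (bellman p r γ) := ⟨by exact_mod_cast hγ1, hlip⟩
  exact ⟨hcontr.fixedPoint _, hcontr.fixedPoint_isFixedPt,
    fun V hV => (hcontr.fixedPoint_unique hV)⟩
end

section
/- The optimal value function dominates the value of every stationary deterministic policy: for every policy π : S → A and every state s, V_π s ≤ V* s. -/
/-- The policy evaluation operator for a stationary deterministic policy `π`:
`(T_π V) s = ∑_{s'} p s (π s) s' * (r s (π s) s' + γ * V s')`. -/
noncomputable def policyEval {S A : Type*} [Fintype S]
    (p : S → A → S → ℝ) (r : S → A → S → ℝ) (γ : ℝ) (π : S → A) (V : S → ℝ) : S → ℝ :=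
  fun s => ∑ s', p s (π s) s' * (r s (π s) s' + γ * V s')

/-- The optimal value function dominates the value of every stationary deterministic policy:
for every policy `π` and every state `s`, `V_π s ≤ V* s`. -/
theorem optimal_value_dominates
    {S A : Type*} [Fintype S] [Nonempty S] [Fintype A] [Nonempty A]
    (p : S → A → S → ℝ) (hp0 : ∀ s a s', 0 ≤ p s a s')
    (hp1 : ∀ s a, ∑ s', p s a s' = 1)
    (r : S → A → S → ℝ) (γ : ℝ) (hγ0 : 0 ≤ γ) (hγ1 : γ < 1)
    (Vstar : S → ℝ) (hfix : bellman p r γ Vstar = Vstar)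
    (huniq : ∀ V : S → ℝ, bellman p r γ V = V → V = Vstar) :
    ∀ π : S → A, ∀ Vπ : S → ℝ, policyEval p r γ π Vπ = Vπ →
      (∀ V : S → ℝ, policyEval p r γ π V = V → V = Vπ) →
      ∀ s : S, Vπ s ≤ Vstar s := by
  intro π Vπ hVπ _ s
  set M : ℝ := Finset.univ.sup' Finset.univ_nonempty (fun t => Vπ t - Vstar t) with hM
  have hle : ∀ t : S, Vπ t - Vstar t ≤ M := fun t =>
    Finset.le_sup' (fun t => Vπ t - Vstar t) (Finset.mem_univ t)
  have hMle : M ≤ γ * M := by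
    obtain ⟨s₀, _, hs₀⟩ := Finset.exists_mem_eq_sup' Finset.univ_nonempty
      (fun t => Vπ t - Vstar t)
    have hs₀' : M = Vπ s₀ - Vstar s₀ := hs₀
    have h1 : Vπ s₀ = ∑ s', p s₀ (π s₀) s' * (r s₀ (π s₀) s' + γ * Vπ s') := by
      conv_lhs => rw [← hVπ]
      rfl
    have h2 : (∑ s', p s₀ (π s₀) s' * (r s₀ (π s₀) s' + γ * Vstar s')) ≤ Vstar s₀ := by
      conv_rhs => rw [← hfix]
      exact Finset.le_sup' (fun a => ∑ s', p s₀ a s' * (r s₀ a s' + γ * Vstar s'))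
        (Finset.mem_univ (π s₀))
    have key : Vπ s₀ - Vstar s₀ ≤
        ∑ s', p s₀ (π s₀) s' * (γ * (Vπ s' - Vstar s')) := by
      have := sub_le_sub (le_of_eq h1) h2
      calc Vπ s₀ - Vstar s₀
          ≤ (∑ s', p s₀ (π s₀) s' * (r s₀ (π s₀) s' + γ * Vπ s'))
            - ∑ s', p s₀ (π s₀) s' * (r s₀ (π s₀) s' + γ * Vstar s') := this
        _ = ∑ s', p s₀ (π s₀) s' * (γ * (Vπ s' - Vstar s')) := by
            rw [← Finset.sum_sub_distrib]; congr 1; ext s'; ring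
    calc M = Vπ s₀ - Vstar s₀ := hs₀'
      _ ≤ ∑ s', p s₀ (π s₀) s' * (γ * (Vπ s' - Vstar s')) := key
      _ ≤ ∑ s', p s₀ (π s₀) s' * (γ * M) := by
          apply Finset.sum_le_sum
          intro s' _
          exact mul_le_mul_of_nonneg_left
            (mul_le_mul_of_nonneg_left (hle s') hγ0) (hp0 _ _ _)
      _ = γ * M := by rw [← Finset.sum_mul, hp1, one_mul]
  have hM0 : M ≤ 0 := by nlinarith
  linarith [hle s]
end
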